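/- Under the situation-1 assumptions (as in the previous statement), d(P^i, Q^K) < d(P^{K+1}, Q^K) = ... = d(P^m, Q^K) for i = 1,...,K, and consequently Q^K is the center of the smallest enclosing circle of P^1,...,P^m with radius d(P^{K+1},Q^K). -/
import Mathlib

open RealInnerProductSpace

theorem stmt9 (n m K : ℕ) (hK : K + 2 ≤ m)
    (P : Fin m → EuclideanSpace ℝ (Fin n))
    (hgen : LinearIndependent ℝ
      (fun i : {j : Fin m // j ≠ ⟨0, by omega⟩} => P i.val - P ⟨0, by omega⟩))
    (L : ℕ → AffineSubspace ℝ (EuclideanSpace ℝ (Fin n)))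
    (hL : ∀ k, L k = affineSpan ℝ (P '' {i : Fin m | k ≤ (i : ℕ)}))
    (Q : ℕ → EuclideanSpace ℝ (Fin n))
    -- Q 0 is the equidistant point in L 0
    (hQ0mem : Q 0 ∈ L 0)
    (hQ0eq : ∀ i, dist (P i) (Q 0) = dist (P ⟨0, by omega⟩) (Q 0))
    -- Q k is the orthogonal projection of Q (k-1) onto L k
    (hproj : ∀ k, 1 ≤ k → k ≤ K →
      Q k ∈ L k ∧ ∀ y ∈ L k, dist (Q k) (Q (k - 1)) ≤ dist y (Q (k - 1)))
    -- barycentric coordinates of the Q k about P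
    (lam : ℕ → Fin m → ℝ)
    (hbary : ∀ k ≤ K, (∑ i, lam k i) = 1 ∧ Q k = ∑ i, lam k i • P i)
    -- sign pattern: exactly one negative component at each step k < K
    (hsign : ∀ k < K, ∀ i : Fin m,
      ((i : ℕ) < k → lam k i = 0) ∧ ((i : ℕ) = k → lam k i < 0) ∧
      (k < (i : ℕ) → 0 < lam k i))
    -- all components nonnegative at step K
    (hsignK : ∀ i : Fin m, ((i : ℕ) < K → lam K i = 0) ∧ (K ≤ (i : ℕ) → 0 < lam K i)) :
    (∀ i : Fin m, (i : ℕ) < K →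
        dist (P i) (Q K) < dist (P ⟨K, by omega⟩) (Q K)) ∧
    (∀ i : Fin m, K ≤ (i : ℕ) →
        dist (P i) (Q K) = dist (P ⟨K, by omega⟩) (Q K)) ∧
    -- Q K is the center of the smallest enclosing circle, with radius d(P^{K+1}, Q^K)
    (∀ R : EuclideanSpace ℝ (Fin n), ∃ i : Fin m,
        dist (P ⟨K, by omega⟩) (Q K) ≤ dist (P i) R) := by
  -- ## basic membership facts
  have memP : ∀ (k : ℕ) (a : Fin m), k ≤ (a : ℕ) → P a ∈ L k := by
    intro k a ha
    rw [hL]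
    exact subset_affineSpan ℝ _ ⟨a, ha, rfl⟩
  have Lmono : ∀ k k' : ℕ, k ≤ k' → L k' ≤ L k := by
    intro k k' h
    rw [hL, hL]
    apply affineSpan_mono
    rintro x ⟨a, ha, rfl⟩
    exact ⟨a, le_trans h ha, rfl⟩
  have Qmem : ∀ k, k ≤ K → Q k ∈ L k := by
    intro k hk
    cases k with
    | zero => exact hQ0mem
    | succ k => exact (hproj (k+1) (by omega) hk).1
  -- ## affine independence and distinctness of consecutive Q's
  have haff : AffineIndependent ℝ P := by
    rw [affineIndependent_iff_linearIndependent_vsub ℝ P ⟨0, by omega⟩]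
    simpa [vsub_eq_sub] using hgen
  have Qne : ∀ k, k < K → Q (k+1) ≠ Q k := by
    intro k hk h
    obtain ⟨hs1, hr1⟩ := hbary k (by omega)
    obtain ⟨hs2, hr2⟩ := hbary (k+1) (by omega)
    have hcomb : Finset.univ.affineCombination ℝ P (lam k)
        = Finset.univ.affineCombination ℝ P (lam (k+1)) := by
      rw [Finset.univ.affineCombination_eq_linear_combination P (lam k) hs1,
          Finset.univ.affineCombination_eq_linear_combination P (lam (k+1)) hs2,
          ← hr1, ← hr2]
      exact h.symm
    have heq := (affineIndependent_iff_eq_of_fintype_affineCombination_eq ℝ P).mp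
      haff _ _ hs1 hs2 hcomb
    have h1 : lam k ⟨k, by omega⟩ < 0 := (hsign k hk ⟨k, by omega⟩).2.1 rfl
    have h2 : lam (k+1) ⟨k, by omega⟩ = 0 := by
      rcases eq_or_lt_of_le (Nat.succ_le_of_lt hk) with hEq | hlt
      · rw [← hEq] at hsignK
        exact (hsignK ⟨k, by omega⟩).1 (by simp)
      · exact (hsign (k+1) hlt ⟨k, by omega⟩).1 (by simp)
    rw [heq, h2] at h1
    exact lt_irrefl _ h1
  -- ## orthogonality of the projection steps
  have orth : ∀ k, k < K → ∀ w ∈ (L (k+1)).direction, (⟪Q (k+1) - Q k, w⟫ = 0) := by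
    intro k hk w hw
    obtain ⟨hmem, hmin⟩ := hproj (k+1) (by omega) (by omega)
    by_cases hw0 : w = 0
    · simp [hw0]
    have hA : 0 < ‖w‖^2 := pow_pos (norm_pos_iff.mpr hw0) 2
    set c := ⟪Q (k+1) - Q k, w⟫ with hc
    have key : ∀ t : ℝ, 0 ≤ 2*t*c + t^2*‖w‖^2 := by
      intro t
      have hy : (t • w) +ᵥ Q (k+1) ∈ L (k+1) :=
        AffineSubspace.vadd_mem_of_mem_direction (Submodule.smul_mem _ _ hw) hmem
      have h2 := hmin _ hy
      rw [dist_eq_norm, dist_eq_norm] at h2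
      simp only [Nat.add_sub_cancel, vadd_eq_add] at h2
      have hdec : t • w + Q (k+1) - Q k = (Q (k+1) - Q k) + t • w := by abel
      rw [hdec] at h2
      have hexp : ‖(Q (k+1) - Q k) + t • w‖^2
          = ‖Q (k+1) - Q k‖^2 + 2*(t*c) + t^2*‖w‖^2 := by
        rw [norm_add_sq_real, real_inner_smul_right, norm_smul, Real.norm_eq_abs, mul_pow,
          sq_abs]
      nlinarith [norm_nonneg (Q (k+1) - Q k), norm_nonneg ((Q (k+1) - Q k) + t • w), h2]
    have h3 := key (-c / ‖w‖^2)
    have h4 : 2 * (-c / ‖w‖^2) * c + (-c / ‖w‖^2)^2 * ‖w‖^2 = -(c^2 / ‖w‖^2) := by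
      field_simp
      ring
    have h5 : c^2 / ‖w‖^2 ≤ 0 := by rw [h4] at h3; linarith
    have h6 : c^2 ≤ 0 := by
      have h7 : c^2 = c^2 / ‖w‖^2 * ‖w‖^2 := by field_simp
      have h8 : c^2 / ‖w‖^2 * ‖w‖^2 ≤ 0 := mul_nonpos_of_nonpos_of_nonneg h5 (le_of_lt hA)
      linarith
    have h9 : c^2 = 0 := le_antisymm h6 (sq_nonneg c)
    exact pow_eq_zero_iff (by norm_num : (2:ℕ) ≠ 0) |>.mp h9
  have cperp : ∀ k, k < K → ∀ a : Fin m, k + 1 ≤ (a:ℕ) →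
      (⟪P a - Q (k+1), Q (k+1) - Q k⟫ = 0) := by
    intro k hk a ha
    have hw : P a - Q (k+1) ∈ (L (k+1)).direction := by
      simpa [vsub_eq_sub] using
        AffineSubspace.vsub_mem_direction (memP (k+1) a ha) (Qmem (k+1) (by omega))
    rw [real_inner_comm]
    exact orth k hk _ hw
  have vdirL : ∀ j k : ℕ, j ≤ k → k < K → Q (k+1) - Q k ∈ (L j).direction := by
    intro j k hj hk
    have h1 : Q (k+1) ∈ L j := Lmono j (k+1) (by omega) (Qmem (k+1) (by omega))
    have h2 : Q k ∈ L j := Lmono j k hj (Qmem k (by omega))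
    simpa [vsub_eq_sub] using AffineSubspace.vsub_mem_direction h1 h2
  -- the orthogonal staircase
  have stair : ∀ k, k < K → ∀ d i : ℕ, i + d = k → (⟪Q i - Q k, Q (k+1) - Q k⟫ = 0) := by
    intro k hk d
    induction d with
    | zero =>
      intro i hi
      have : i = k := by omega
      simp [this]
    | succ d ih =>
      intro i hi
      have h1 : Q i - Q k = (Q i - Q (i+1)) + (Q (i+1) - Q k) := by abel
      rw [h1, inner_add_left, ih (i+1) (by omega)]
      have h2 : (⟪Q (i+1) - Q i, Q (k+1) - Q k⟫ : ℝ) = 0 :=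
        orth i (by omega) _ (vdirL (i+1) k (by omega) hk)
      have h3 : Q i - Q (i+1) = -(Q (i+1) - Q i) := by abel
      rw [h3, inner_neg_left, h2]
      ring
  -- barycentric difference formula
  have Qdiff : ∀ k, k ≤ K → ∀ z : EuclideanSpace ℝ (Fin n),
      Q k - z = ∑ b : Fin m, lam k b • (P b - z) := by
    intro k hk z
    obtain ⟨hs, hr⟩ := hbary k hk
    calc Q k - z = (∑ b, lam k b • P b) - (∑ b, lam k b) • z := by rw [← hr, hs, one_smul]
    _ = ∑ b : Fin m, lam k b • (P b - z) := by
        rw [Finset.sum_smul, ← Finset.sum_sub_distrib]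
        exact Finset.sum_congr rfl fun b _ => (smul_sub _ _ _).symm
  -- ## key positivity lemma
  have key : ∀ d : ℕ, ∀ k, k < K → ∀ a : Fin m, (a:ℕ) ≤ k → k - (a:ℕ) ≤ d →
      (0 < ⟪P a - Q (k+1), Q (k+1) - Q k⟫) := by
    intro d
    induction d using Nat.strong_induction_on with
    | _ d ih =>
    intro k hk a ha hd
    set v := Q (k+1) - Q k with hv
    have hvne : v ≠ 0 := sub_ne_zero.mpr (Qne k hk)
    have hvpos : 0 < ‖v‖^2 := pow_pos (norm_pos_iff.mpr hvne) 2
    have hsum : ∑ b : Fin m, lam (a:ℕ) b * ⟪P b - Q (k+1), v⟫ = -‖v‖^2 := by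
      have h2 : Q (a:ℕ) - Q (k+1) = (Q (a:ℕ) - Q k) - v := by rw [hv]; abel
      have h1 : (⟪Q (a:ℕ) - Q (k+1), v⟫ : ℝ) = -‖v‖^2 := by
        rw [h2, inner_sub_left, stair k hk (k - (a:ℕ)) (a:ℕ) (by omega), hv,
          real_inner_self_eq_norm_sq]
        ring
      rw [← h1, Qdiff (a:ℕ) (by omega) (Q (k+1)), sum_inner]
      exact Finset.sum_congr rfl fun b _ => (real_inner_smul_left _ _ _).symm
    have hsplit : lam (a:ℕ) a * ⟪P a - Q (k+1), v⟫
        + ∑ b ∈ Finset.univ.erase a, lam (a:ℕ) b * ⟪P b - Q (k+1), v⟫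
        = ∑ b : Fin m, lam (a:ℕ) b * ⟪P b - Q (k+1), v⟫ :=
      Finset.add_sum_erase Finset.univ
        (fun b => lam (a:ℕ) b * ⟪P b - Q (k+1), v⟫) (Finset.mem_univ a)
    have hrest : 0 ≤ ∑ b ∈ Finset.univ.erase a, lam (a:ℕ) b * ⟪P b - Q (k+1), v⟫ := by
      apply Finset.sum_nonneg
      intro b hb
      have hba : b ≠ a := (Finset.mem_erase.mp hb).1
      rcases lt_trichotomy ((b:ℕ)) ((a:ℕ)) with h | h | h
      · rw [(hsign (a:ℕ) (by omega) b).1 h, zero_mul]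
      · exact absurd (Fin.ext h) hba
      · rcases le_or_gt ((b:ℕ)) k with hbk | hbk
        · have hlp : 0 < lam (a:ℕ) b := (hsign (a:ℕ) (by omega) b).2.2 h
          have hcp : 0 < ⟪P b - Q (k+1), v⟫ := ih (k - (b:ℕ)) (by omega) k hk b hbk le_rfl
          exact le_of_lt (mul_pos hlp hcp)
        · rw [cperp k hk b (by omega), mul_zero]
    have hlaa : lam (a:ℕ) a < 0 := (hsign (a:ℕ) (by omega) a).2.1 rfl
    have hfa : lam (a:ℕ) a * ⟪P a - Q (k+1), v⟫ < 0 := by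
      linarith [hsplit, hsum, hrest, hvpos]
    by_contra hcon
    push_neg at hcon
    have hnn : 0 ≤ (-(lam (a:ℕ) a)) * (-⟪P a - Q (k+1), v⟫) :=
      mul_nonneg (neg_nonneg.mpr (le_of_lt hlaa)) (neg_nonneg.mpr hcon)
    rw [neg_mul_neg] at hnn
    linarith
  -- ## equidistance at every stage
  have equi : ∀ k, k ≤ K → ∀ a b : Fin m, k ≤ (a:ℕ) → k ≤ (b:ℕ) →
      dist (P a) (Q k) = dist (P b) (Q k) := by
    intro k
    induction k with
    | zero => intro _ a b _ _; rw [hQ0eq a, hQ0eq b]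
    | succ k ih =>
      intro hk a b ha hb
      have step : ∀ c : Fin m, k + 1 ≤ (c:ℕ) →
          dist (P c) (Q (k+1))^2 = dist (P c) (Q k)^2 - ‖Q (k+1) - Q k‖^2 := by
        intro c hc
        have hdec : P c - Q k = (P c - Q (k+1)) + (Q (k+1) - Q k) := by abel
        have hh := norm_add_sq_real (P c - Q (k+1)) (Q (k+1) - Q k)
        rw [cperp k (by omega) c hc, ← hdec] at hh
        rw [dist_eq_norm, dist_eq_norm]
        linarith
      have h1 := step a ha
      have h2 := step b hb
      have h3 := ih (by omega) a b (by omega) (by omega)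
      have h4 : dist (P a) (Q (k+1))^2 = dist (P b) (Q (k+1))^2 := by rw [h1, h2, h3]
      calc dist (P a) (Q (k+1)) = Real.sqrt (dist (P a) (Q (k+1))^2) :=
            (Real.sqrt_sq dist_nonneg).symm
      _ = Real.sqrt (dist (P b) (Q (k+1))^2) := by rw [h4]
      _ = dist (P b) (Q (k+1)) := Real.sqrt_sq dist_nonneg
  refine ⟨?_, ?_, ?_⟩
  · -- part 1 : strict inequality for i < K
    intro a ha
    have hjlt : K < m := by omega
    set j : Fin m := ⟨K, hjlt⟩ with hj
    show dist (P a) (Q K) < dist (P j) (Q K)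
    have phistep : ∀ N, N < K →
        ‖P j - Q (N+1)‖^2 - ‖P a - Q (N+1)‖^2
          = (‖P j - Q N‖^2 - ‖P a - Q N‖^2)
            + 2 * ⟪P a - Q (N+1), Q (N+1) - Q N⟫ := by
      intro N hN2
      have e1 : P j - Q N = (P j - Q (N+1)) + (Q (N+1) - Q N) := by abel
      have e2 : P a - Q N = (P a - Q (N+1)) + (Q (N+1) - Q N) := by abel
      have n1 := norm_add_sq_real (P j - Q (N+1)) (Q (N+1) - Q N)
      have n2 := norm_add_sq_real (P a - Q (N+1)) (Q (N+1) - Q N)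
      rw [cperp N hN2 j (by simp [hj]; omega), ← e1] at n1
      rw [← e2] at n2
      linarith
    have grow : ∀ d : ℕ, (a:ℕ) + d ≤ K → 0 < d →
        0 < ‖P j - Q ((a:ℕ)+d)‖^2 - ‖P a - Q ((a:ℕ)+d)‖^2 := by
      intro d
      induction d with
      | zero => intro _ h; exact absurd h (lt_irrefl 0)
      | succ d ihd =>
        intro hd _
        show 0 < ‖P j - Q ((a:ℕ)+d+1)‖^2 - ‖P a - Q ((a:ℕ)+d+1)‖^2
        have hstep := phistep ((a:ℕ)+d) (by omega)
        have hkey := key K ((a:ℕ)+d) (by omega) a (by omega) (by omega)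
        rcases Nat.eq_zero_or_pos d with h0 | h0
        · subst h0
          have hbase : ‖P j - Q (a:ℕ)‖^2 - ‖P a - Q (a:ℕ)‖^2 = 0 := by
            have he := equi (a:ℕ) (by omega) a j le_rfl (by simp [hj]; omega)
            rw [dist_eq_norm, dist_eq_norm] at he
            rw [he]
            ring
          simp only [Nat.add_zero] at hstep hkey ⊢
          linarith [hstep, hbase, hkey]
        · have hih := ihd (by omega) h0
          linarith [hstep, hih, hkey]
    have hfin := grow (K - (a:ℕ)) (by omega) (by omega)
    rw [show (a:ℕ) + (K - (a:ℕ)) = K by omega] at hfin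
    rw [dist_eq_norm, dist_eq_norm]
    by_contra hcon
    push_neg at hcon
    nlinarith [norm_nonneg (P a - Q K), norm_nonneg (P j - Q K), hcon, hfin]
  · -- part 2 : equality for i ≥ K
    intro a ha
    have hjlt : K < m := by omega
    exact equi K le_rfl a ⟨K, hjlt⟩ ha le_rfl
  · -- part 3 : Q K is the center of the smallest enclosing circle
    intro R
    by_contra hcon
    push_neg at hcon
    have hjlt : K < m := by omega
    set j : Fin m := ⟨K, hjlt⟩ with hj
    set r := dist (P j) (Q K) with hr
    have hcon' : ∀ i : Fin m, dist (P i) R < r := hcon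
    have hr0 : 0 ≤ r := dist_nonneg
    have hlam0 : ∀ b : Fin m, 0 ≤ lam K b := by
      intro b
      rcases lt_or_ge ((b:ℕ)) K with h | h
      · rw [(hsignK b).1 h]
      · exact le_of_lt ((hsignK b).2 h)
    obtain ⟨hs, hq⟩ := hbary K le_rfl
    have hterm : ∀ b : Fin m,
        lam K b * ‖P b - R‖^2
          = lam K b * r^2 + lam K b * (2 * ⟪P b - Q K, Q K - R⟫)
            + lam K b * ‖Q K - R‖^2 := by
      intro b
      rcases lt_or_ge ((b:ℕ)) K with h | h
      · simp [(hsignK b).1 h]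
      · have hd : ‖P b - Q K‖ = r := by
          rw [hr, dist_eq_norm, ← dist_eq_norm]
          exact equi K le_rfl b j h (by simp [hj])
        have hdecomp : P b - R = (P b - Q K) + (Q K - R) := by abel
        rw [hdecomp, norm_add_sq_real, hd]
        ring
    have e1 : ∑ b : Fin m, lam K b * r^2 = r^2 := by rw [← Finset.sum_mul, hs, one_mul]
    have e3 : ∑ b : Fin m, lam K b * ‖Q K - R‖^2 = ‖Q K - R‖^2 := by
      rw [← Finset.sum_mul, hs, one_mul]
    have e2 : ∑ b : Fin m, lam K b * (2 * ⟪P b - Q K, Q K - R⟫) = 0 := by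
      have hz : (0 : EuclideanSpace ℝ (Fin n)) = ∑ b : Fin m, lam K b • (P b - Q K) := by
        rw [← Qdiff K le_rfl (Q K)]
        simp
      have hinz : (⟪(0 : EuclideanSpace ℝ (Fin n)), Q K - R⟫ : ℝ) = 0 := inner_zero_left _
      rw [hz, sum_inner] at hinz
      have : ∑ b : Fin m, lam K b * ⟪P b - Q K, Q K - R⟫ = 0 := by
        rw [← hinz]
        exact Finset.sum_congr rfl fun b _ => (real_inner_smul_left _ _ _).symm
      calc ∑ b : Fin m, lam K b * (2 * ⟪P b - Q K, Q K - R⟫)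
          = 2 * ∑ b : Fin m, lam K b * ⟪P b - Q K, Q K - R⟫ := by
            rw [Finset.mul_sum]
            exact Finset.sum_congr rfl fun b _ => by ring
      _ = 0 := by rw [this, mul_zero]
    have hID : ∑ b : Fin m, lam K b * ‖P b - R‖^2 = r^2 + ‖Q K - R‖^2 := by
      rw [Finset.sum_congr rfl fun b _ => hterm b, Finset.sum_add_distrib,
        Finset.sum_add_distrib, e1, e2, e3]
      ring
    have hlt : ∑ b : Fin m, lam K b * ‖P b - R‖^2 < r^2 := by
      have hle : ∑ b : Fin m, lam K b * ‖P b - R‖^2 < ∑ b : Fin m, lam K b * r^2 := by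
        apply Finset.sum_lt_sum
        · intro b _
          apply mul_le_mul_of_nonneg_left _ (hlam0 b)
          have hb := hcon' b
          rw [dist_eq_norm] at hb
          nlinarith [norm_nonneg (P b - R), hb, hr0]
        · refine ⟨j, Finset.mem_univ j, ?_⟩
          apply mul_lt_mul_of_pos_left _ ((hsignK j).2 (by simp [hj]))
          have hb := hcon' j
          rw [dist_eq_norm] at hb
          nlinarith [norm_nonneg (P j - R), hb, hr0]
      rw [e1] at hle
      exact hle
    linarith [hID, hlt, sq_nonneg ‖Q K - R‖]
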